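/- arXiv:2212.07825 — 2 statements merged into one kernel-verified Lean document; each statement's English description precedes it below -/
import Mathlib

section
/- If A ⊆ ℝ^N is closed and nonempty, x ∉ A, the distance function dist(·,A) is differentiable at x, and y ∈ A is a point with dist(x,A) = |x−y|, then ∇dist(x,A) = (x−y)/|x−y|; in particular |∇dist(x,A)| = 1. -/
open Metric Set

/-!
Moving from `x` towards a nearest point `y ∈ A`, the distance to `A` drops at unit speed:
`dist(x + t(y - x), A) = (1 - t)|x - y|` for `t ∈ [0, 1]`, since it is at most the distance to `y`
and at least `dist(x, A) - t|x - y|` by the `1`-Lipschitz property. Hence the gradient `g` satisfies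
`⟪g, x - y⟫ = |x - y|`, while the Lipschitz property gives `|g| ≤ 1`; this is the equality case of
Cauchy–Schwarz, which forces `g = (x - y)/|x - y|`.
-/

theorem HasFDerivAt.apply_eq_of_forall_mem_Icc {E F : Type*} [NormedAddCommGroup E]
    [NormedSpace ℝ E] [NormedAddCommGroup F] [NormedSpace ℝ F] {f : E → F} {f' : E →L[ℝ] F}
    {x v : E} {c : F} (hf : HasFDerivAt f f' x)
    (h : ∀ t ∈ Icc (0 : ℝ) 1, f (x + t • v) = f x + t • c) : f' v = c := by
  have hline : HasDerivAt (fun t : ℝ => f (x + t • v)) (f' v) 0 := by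
    have hpath : HasDerivAt (fun t : ℝ => x + t • v) v 0 := by
      simpa using ((hasDerivAt_id (0 : ℝ)).smul_const v).const_add x
    exact hf.comp_hasDerivAt_of_eq 0 hpath (by simp)
  have haffine : HasDerivAt (fun t : ℝ => f x + t • c) c 0 := by
    simpa using ((hasDerivAt_id (0 : ℝ)).smul_const c).const_add (f x)
  have h0 : (0 : ℝ) ∈ Icc (0 : ℝ) 1 := ⟨le_rfl, zero_le_one⟩
  exact (uniqueDiffOn_Icc zero_lt_one 0 h0).eq_deriv _
    (hline.hasDerivWithinAt.congr_of_mem (fun t ht => (h t ht).symm) h0)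
    haffine.hasDerivWithinAt

theorem infDist_add_smul_sub_of_infDist_eq {E : Type*} [SeminormedAddCommGroup E]
    [NormedSpace ℝ E] {A : Set E} {x y : E} (hy : y ∈ A) (hxy : infDist x A = ‖x - y‖)
    {t : ℝ} (ht : t ∈ Icc (0 : ℝ) 1) :
    infDist (x + t • (y - x)) A = infDist x A + t • (-‖x - y‖) := by
  obtain ⟨ht0, ht1⟩ := ht
  have hzy : dist (x + t • (y - x)) y = (1 - t) * ‖x - y‖ := by
    rw [dist_eq_norm, show x + t • (y - x) - y = (1 - t) • (x - y) by module, norm_smul,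
      Real.norm_of_nonneg (sub_nonneg.2 ht1)]
  have hxz : dist x (x + t • (y - x)) = t * ‖x - y‖ := by
    rw [dist_eq_norm, show x - (x + t • (y - x)) = t • (x - y) by module, norm_smul,
      Real.norm_of_nonneg ht0]
  have hupper := infDist_le_dist_of_mem (x := x + t • (y - x)) hy
  have hlower := infDist_le_infDist_add_dist (x := x) (y := x + t • (y - x)) (s := A)
  rw [smul_eq_mul]
  linarith

theorem norm_gradient_le_of_lipschitzWith {F : Type*} [NormedAddCommGroup F]
    [InnerProductSpace ℝ F] [CompleteSpace F] {f : F → ℝ} {K : NNReal} (hf : LipschitzWith K f)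
    (x : F) : ‖gradient f x‖ ≤ K := by
  rw [gradient, LinearIsometryEquiv.norm_map]
  exact norm_fderiv_le_of_lipschitz ℝ hf

theorem eq_inv_norm_smul_of_norm_le_one_of_inner_eq_norm {F : Type*} [NormedAddCommGroup F]
    [InnerProductSpace ℝ F] {g v : F} (hg : ‖g‖ ≤ 1) (hgv : inner ℝ g v = ‖v‖) (hv : v ≠ 0) :
    g = ‖v‖⁻¹ • v := by
  have hv' : ‖v‖ ≠ 0 := norm_ne_zero_iff.2 hv
  have hdist : ‖g - ‖v‖⁻¹ • v‖ ^ 2 = ‖g‖ ^ 2 - 1 := by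
    rw [norm_sub_sq_real, real_inner_smul_right, hgv, norm_smul, norm_inv,
      norm_norm, inv_mul_cancel₀ hv']
    ring
  have hsq : ‖g‖ ^ 2 ≤ 1 := by nlinarith [norm_nonneg g]
  have hzero : ‖g - ‖v‖⁻¹ • v‖ = 0 := by nlinarith [sq_nonneg ‖g - ‖v‖⁻¹ • v‖]
  exact sub_eq_zero.1 (norm_eq_zero.1 hzero)

theorem stmt_1_general (N : ℕ) (A : Set (EuclideanSpace ℝ (Fin N)))
    (x : EuclideanSpace ℝ (Fin N))
    (hx : x ∉ A)
    (hdiff : DifferentiableAt ℝ (fun z => Metric.infDist z A) x)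
    (y : EuclideanSpace ℝ (Fin N)) (hy : y ∈ A)
    (hxy : Metric.infDist x A = ‖x - y‖) :
    gradient (fun z => Metric.infDist z A) x = ‖x - y‖⁻¹ • (x - y) ∧
      ‖gradient (fun z => Metric.infDist z A) x‖ = 1 := by
  set g := gradient (fun z => infDist z A) x
  have hxy_ne : x - y ≠ 0 := sub_ne_zero.2 fun h => hx (h ▸ hy)
  have hinner : inner ℝ g (y - x) = -‖x - y‖ :=
    HasFDerivAt.apply_eq_of_forall_mem_Icc hdiff.hasGradientAt
      fun t ht => infDist_add_smul_sub_of_infDist_eq hy hxy ht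
  have hg_eq : g = ‖x - y‖⁻¹ • (x - y) := by
    refine eq_inv_norm_smul_of_norm_le_one_of_inner_eq_norm ?_ ?_ hxy_ne
    · simpa using norm_gradient_le_of_lipschitzWith (lipschitz_infDist_pt A) x
    · rw [← neg_sub y x, inner_neg_right, hinner, neg_neg, norm_neg, norm_sub_rev]
  exact ⟨hg_eq, hg_eq ▸ norm_smul_inv_norm hxy_ne⟩

/-- If `A ⊆ ℝ^N` is closed and nonempty, `x ∉ A`, `dist(·,A)` is differentiable at `x`,
and `y ∈ A` realizes the distance, then `∇dist(x,A) = (x−y)/|x−y|`; in particular its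
norm is `1`. -/
theorem stmt_1 (N : ℕ) (A : Set (EuclideanSpace ℝ (Fin N)))
    (hA : IsClosed A) (hne : A.Nonempty) (x : EuclideanSpace ℝ (Fin N))
    (hx : x ∉ A)
    (hdiff : DifferentiableAt ℝ (fun z => Metric.infDist z A) x)
    (y : EuclideanSpace ℝ (Fin N)) (hy : y ∈ A)
    (hxy : Metric.infDist x A = ‖x - y‖) :
    gradient (fun z => Metric.infDist z A) x = ‖x - y‖⁻¹ • (x - y) ∧
      ‖gradient (fun z => Metric.infDist z A) x‖ = 1 :=
  stmt_1_general N A x hx hdiff y hy hxy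
end

section
/- Let E be a real Hilbert space, J(u) = (1/2)‖u‖² − I(u) with I ∈ C¹(E), I(0) = 0, and Q ⊆ E a closed subspace. Assume: (J1) there is r > 0 with inf_{‖u‖=r} J(u) > 0; (J2) whenever t_n → +∞, u_n ∈ Q, u_n → u ≠ 0, one has I(t_n u_n)/t_n² → +∞. Then for every u ∈ Q \ {0} the map t ↦ J(tu) attains a positive local maximum at some t₀ > 0, and t₀u lies in the Nehari manifold N = {v ≠ 0 : J'(v)(v) = 0}; in particular N ∩ Q ≠ ∅. -/
/-!
Along the ray `t ↦ t • u` the functional `J` starts at `0`, reaches at least `a > 0` on the sphere of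
radius `r`, and tends to `-∞` because `I (t • u) / t²` blows up. A maximum on a large compact
interval `[0, T]` is therefore interior, hence a local maximum of `t ↦ J (t • u)`; there the
derivative `J' (t₀ • u) u` vanishes, and scaling by `t₀` gives the Nehari identity.
-/

open Filter

/-- The functional `J` of the paper. -/
noncomputable def energy {E : Type*} [NormedAddCommGroup E] (I : E → ℝ) (v : E) : ℝ :=
  1 / 2 * ‖v‖ ^ 2 - I v

theorem exists_pos_isLocalMax_of_tendsto_atBot {g : ℝ → ℝ} {a s : ℝ} (hg : Continuous g)
    (h0 : g 0 < a) (hs : 0 ≤ s) (hgs : a ≤ g s) (hbot : Tendsto g atTop atBot) :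
    ∃ t₀, 0 < t₀ ∧ a ≤ g t₀ ∧ IsLocalMax g t₀ := by
  obtain ⟨T, hgT, hsT⟩ := ((hbot.eventually_lt_atBot a).and (eventually_gt_atTop s)).exists
  have hsIcc : s ∈ Set.Icc 0 T := ⟨hs, hsT.le⟩
  obtain ⟨t₀, ht₀, hmax⟩ := isCompact_Icc.exists_isMaxOn_mem_subset (s := Set.Ioo 0 T)
    hg.continuousOn hsIcc (by
      rw [Set.Icc_sdiff_Ioo_same (hs.trans hsT.le)]
      rintro z (rfl | rfl) <;> linarith)
  exact ⟨t₀, ht₀.1, hgs.trans (hmax hsIcc), hmax.isLocalMax (Icc_mem_nhds ht₀.1 ht₀.2)⟩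

theorem IsLocalMax.hasFDerivAt_apply_smul_self_eq_zero {F : Type*} [NormedAddCommGroup F]
    [NormedSpace ℝ F] {J : F → ℝ} {J' : F →L[ℝ] ℝ} {u : F} {t₀ : ℝ}
    (hmax : IsLocalMax (fun t : ℝ => J (t • u)) t₀) (hJ : HasFDerivAt J J' (t₀ • u)) :
    J' (t₀ • u) = 0 := by
  have hderiv : HasDerivAt (fun t : ℝ => J (t • u)) (J' u) t₀ :=
    hJ.comp_hasDerivAt t₀ (by simpa using (hasDerivAt_id t₀).smul_const u)
  rw [map_smul, hmax.hasDerivAt_eq_zero hderiv, smul_zero]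

section InnerProductSpace

variable {E : Type*} [NormedAddCommGroup E] [InnerProductSpace ℝ E] {I : E → ℝ}

theorem hasFDerivAt_energy {I' : E →L[ℝ] ℝ} {v : E} (hI : HasFDerivAt I I' v) :
    HasFDerivAt (energy I) (innerSL ℝ v - I') v := by
  refine (((hasStrictFDerivAt_norm_sq v).hasFDerivAt.const_mul (1 / 2 : ℝ)).sub hI).congr_fderiv ?_
  ext w
  simp

theorem tendsto_energy_smul_atBot {u : E}
    (hI : Tendsto (fun t : ℝ => I (t • u) / t ^ 2) atTop atTop) :
    Tendsto (fun t : ℝ => energy I (t • u)) atTop atBot := by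
  have hfactor : Tendsto (fun t : ℝ => t ^ 2 * (1 / 2 * ‖u‖ ^ 2 - I (t • u) / t ^ 2))
      atTop atBot :=
    (tendsto_pow_atTop two_ne_zero).atTop_mul_atBot₀
      (tendsto_atBot_add_const_left _ _ (tendsto_neg_atBot_iff.mpr hI))
  refine hfactor.congr' ?_
  filter_upwards [eventually_gt_atTop 0] with t ht
  simp only [energy, norm_smul, Real.norm_of_nonneg ht.le]
  field_simp

end InnerProductSpace

theorem stmt_14_general (E : Type*) [NormedAddCommGroup E] [InnerProductSpace ℝ E]
    (I : E → ℝ) (I' : E → E →L[ℝ] ℝ) (hI : ∀ u, HasFDerivAt I (I' u) u) (hI0 : I 0 = 0)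
    (Q : Submodule ℝ E)
    (r : ℝ) (hr : 0 < r) (a : ℝ) (ha : 0 < a)
    (hJ1 : ∀ u : E, ‖u‖ = r → a ≤ 1/2 * ‖u‖^2 - I u)
    (hJ2 : ∀ (t : ℕ → ℝ) (v : ℕ → E) (u : E), Filter.Tendsto t Filter.atTop Filter.atTop →
      (∀ n, v n ∈ Q) → Filter.Tendsto v Filter.atTop (nhds u) → u ≠ 0 →
      Filter.Tendsto (fun n => I (t n • v n) / (t n)^2) Filter.atTop Filter.atTop) :
    ∀ u ∈ Q, u ≠ 0 → ∃ t₀ : ℝ, 0 < t₀ ∧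
      0 < 1/2 * ‖t₀ • u‖^2 - I (t₀ • u) ∧
      (∃ ε > 0, ∀ t : ℝ, 0 < t → |t - t₀| < ε →
        1/2 * ‖t • u‖^2 - I (t • u) ≤ 1/2 * ‖t₀ • u‖^2 - I (t₀ • u)) ∧
      ‖t₀ • u‖^2 - I' (t₀ • u) (t₀ • u) = 0 := by
  intro u huQ hu0
  have hJ (v : E) : HasFDerivAt (energy I) (innerSL ℝ v - I' v) v := hasFDerivAt_energy (hI v)
  have hcont : Continuous fun t : ℝ => energy I (t • u) :=
    (continuous_iff_continuousAt.2 fun v => (hJ v).continuousAt).comp (continuous_id.smul continuous_const)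
  have hbot := tendsto_energy_smul_atBot (tendsto_iff_seq_tendsto.2 fun t ht =>
    hJ2 t (fun _ => u) u ht (fun _ => huQ) tendsto_const_nhds hu0)
  have hsphere : ‖(r / ‖u‖) • u‖ = r := by
    rw [norm_smul, Real.norm_of_nonneg (by positivity), div_mul_cancel₀ _ (norm_ne_zero_iff.2 hu0)]
  obtain ⟨t₀, ht₀, hat₀, hmax⟩ := exists_pos_isLocalMax_of_tendsto_atBot hcont
    (by simpa [energy, hI0] using ha) (by positivity) (hJ1 _ hsphere) hbot
  obtain ⟨ε, hε, hball⟩ := Metric.eventually_nhds_iff.1 hmax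
  refine ⟨t₀, ht₀, ha.trans_le hat₀, ⟨ε, hε, fun t _ ht => hball ht⟩, ?_⟩
  have hNehari := hmax.hasFDerivAt_apply_smul_self_eq_zero (hJ (t₀ • u))
  rwa [sub_apply, innerSL_apply_apply, real_inner_self_eq_norm_sq] at hNehari

/-- Nonemptiness of the Nehari manifold intersected with `Q`: under (J1) and (J2), for
every `u ∈ Q \ {0}` the map `t ↦ J(tu)` attains a positive local maximum at some
`t₀ > 0`, and `t₀u` lies in the Nehari manifold; in particular `N ∩ Q ≠ ∅`. -/
theorem stmt_14 (E : Type*) [NormedAddCommGroup E] [InnerProductSpace ℝ E]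
    [CompleteSpace E]
    (I : E → ℝ) (I' : E → E →L[ℝ] ℝ) (hI : ∀ u, HasFDerivAt I (I' u) u) (hI0 : I 0 = 0)
    (Q : Submodule ℝ E) (hQ : IsClosed (Q : Set E))
    (r : ℝ) (hr : 0 < r) (a : ℝ) (ha : 0 < a)
    (hJ1 : ∀ u : E, ‖u‖ = r → a ≤ 1/2 * ‖u‖^2 - I u)
    (hJ2 : ∀ (t : ℕ → ℝ) (v : ℕ → E) (u : E), Filter.Tendsto t Filter.atTop Filter.atTop →
      (∀ n, v n ∈ Q) → Filter.Tendsto v Filter.atTop (nhds u) → u ≠ 0 →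
      Filter.Tendsto (fun n => I (t n • v n) / (t n)^2) Filter.atTop Filter.atTop) :
    ∀ u ∈ Q, u ≠ 0 → ∃ t₀ : ℝ, 0 < t₀ ∧
      0 < 1/2 * ‖t₀ • u‖^2 - I (t₀ • u) ∧
      (∃ ε > 0, ∀ t : ℝ, 0 < t → |t - t₀| < ε →
        1/2 * ‖t • u‖^2 - I (t • u) ≤ 1/2 * ‖t₀ • u‖^2 - I (t₀ • u)) ∧
      ‖t₀ • u‖^2 - I' (t₀ • u) (t₀ • u) = 0 :=
  stmt_14_general E I I' hI hI0 Q r hr a ha hJ1 hJ2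
end
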